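/- For all g, h in SL₂(ℝ) and z in the upper half-plane ℍ, the quantity ω(g,h) := (1/(2πi))(Log j(g, h·z) + Log j(h,z) − Log j(gh,z)) is independent of z, where Log is the principal branch of the logarithm and j(g,z) = c_g z + d_g. -/

import Mathlib

open Complex

/-- The automorphy factor `j(g,z) = cz + d` for `g = (a b; c d) ∈ SL₂(ℝ)`. -/
noncomputable def jf (g : Matrix.SpecialLinearGroup (Fin 2) ℝ) (z : ℂ) : ℂ :=
  (g.1 1 0 : ℝ) * z + (g.1 1 1 : ℝ)

/-- The Möbius action `g·z = (az+b)/(cz+d)`. -/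
noncomputable def act (g : Matrix.SpecialLinearGroup (Fin 2) ℝ) (z : ℂ) : ℂ :=
  ((g.1 0 0 : ℝ) * z + (g.1 0 1 : ℝ)) / jf g z

/-- `ω(g,h) = (1/(2πi))(Log j(g,h·z) + Log j(h,z) − Log j(gh,z))`. -/
noncomputable def om (g h : Matrix.SpecialLinearGroup (Fin 2) ℝ) (z : ℂ) : ℂ :=
  (1 / (2 * Real.pi * I)) *
    (Complex.log (jf g (act h z)) + Complex.log (jf h z) - Complex.log (jf (g * h) z))

/-!
Since `j` is a cocycle, `j(g, h·z) j(h, z) = j(gh, z)`, the exponential of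
`Log j(g, h·z) + Log j(h, z) − Log j(gh, z)` is `1`, so this function of `z` takes values in the
discrete set `2πiℤ`. It is continuous on the connected upper half-plane (each `Log j(k, ·)` is
either constant or avoids the branch cut there), hence constant.
-/

theorem IsPreconnected.eq_of_exp_eq_one {X : Type*} [TopologicalSpace X] {S : Set X}
    (hS : IsPreconnected S) {f : X → ℂ} (hf : ContinuousOn f S)
    (hexp : ∀ x ∈ S, exp (f x) = 1) {x y : X} (hx : x ∈ S) (hy : y ∈ S) : f x = f y := by
  have hdisc : IsDiscrete (AddSubgroup.zmultiples (2 * Real.pi * I) : Set ℂ) :=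
    SetLike.isDiscrete_iff_discreteTopology.mpr inferInstance
  refine hS.constant_of_mapsTo hdisc hf (fun x hx => ?_) hx hy
  obtain ⟨n, hn⟩ := exp_eq_one_iff.mp (hexp x hx)
  exact AddSubgroup.mem_zmultiples_iff.mpr ⟨n, by rw [zsmul_eq_mul, hn]⟩

namespace SL2

variable (g h : Matrix.SpecialLinearGroup (Fin 2) ℝ)

lemma det_fin_two_eq_one : g.1 0 0 * g.1 1 1 - g.1 0 1 * g.1 1 0 = 1 := by
  rw [← Matrix.det_fin_two]
  exact g.det_coe

lemma im_jf (z : ℂ) : (jf g z).im = g.1 1 0 * z.im := by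
  simp [jf]

lemma continuous_jf : Continuous (jf g) := by
  unfold jf
  fun_prop

lemma jf_ne_zero {z : ℂ} (hz : 0 < z.im) : jf g z ≠ 0 := by
  intro h0
  by_cases hc : g.1 1 0 = 0
  · have hd : g.1 1 1 = 0 := by simpa [jf, hc] using congrArg re h0
    simpa [hc, hd] using det_fin_two_eq_one g
  · have := congrArg im h0
    rw [im_jf, zero_im] at this
    exact mul_ne_zero hc hz.ne' this

lemma im_act (z : ℂ) : (act g z).im = z.im / normSq (jf g z) := by
  rw [act, div_im, div_sub_div_same]
  congr 1
  simp only [jf, add_im, add_re, mul_im, mul_re, ofReal_re, ofReal_im]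
  linear_combination z.im * det_fin_two_eq_one g

lemma im_act_pos {z : ℂ} (hz : 0 < z.im) : 0 < (act g z).im := by
  rw [im_act]
  exact div_pos hz (normSq_pos.mpr (jf_ne_zero g hz))

lemma continuousOn_act : ContinuousOn (act g) {z : ℂ | 0 < z.im} := by
  unfold act
  exact (Continuous.continuousOn (by fun_prop)).div (continuous_jf g).continuousOn
    fun z hz => jf_ne_zero g hz

lemma jf_mul {z : ℂ} (hz : 0 < z.im) : jf g (act h z) * jf h z = jf (g * h) z := by
  have hne := jf_ne_zero h hz
  simp only [jf, act, Matrix.SpecialLinearGroup.coe_mul, Matrix.mul_apply,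
    Fin.sum_univ_two] at hne ⊢
  push_cast
  rw [add_mul, mul_assoc, div_mul_cancel₀ _ hne]
  ring

lemma continuousOn_log_jf : ContinuousOn (fun z => log (jf g z)) {z : ℂ | 0 < z.im} := by
  by_cases hc : g.1 1 0 = 0
  · have hconst : (fun z => log (jf g z)) = fun _ => log (g.1 1 1) := by
      ext z; simp [jf, hc]
    rw [hconst]
    exact continuousOn_const
  · refine fun z hz => ((continuous_jf g).continuousAt.continuousWithinAt).clog ?_
    exact mem_slitPlane_iff.mpr (Or.inr (by rw [im_jf]; exact mul_ne_zero hc (ne_of_gt hz)))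

end SL2

open SL2 in
theorem om_independent_of_z (g h : Matrix.SpecialLinearGroup (Fin 2) ℝ)
    (z w : ℂ) (hz : 0 < z.im) (hw : 0 < w.im) : om g h z = om g h w := by
  set H : Set ℂ := {z : ℂ | 0 < z.im}
  have hcont : ContinuousOn
      (fun z => log (jf g (act h z)) + log (jf h z) - log (jf (g * h) z)) H :=
    (((continuousOn_log_jf g).comp (continuousOn_act h) fun _ => im_act_pos h).add
      (continuousOn_log_jf h)).sub (continuousOn_log_jf (g * h))
  have hexp : ∀ z ∈ H, exp (log (jf g (act h z)) + log (jf h z) - log (jf (g * h) z)) = 1 := by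
    intro z hz
    rw [exp_sub, exp_add, exp_log (jf_ne_zero g (im_act_pos h hz)), exp_log (jf_ne_zero h hz),
      exp_log (jf_ne_zero (g * h) hz), jf_mul g h hz, div_self (jf_ne_zero (g * h) hz)]
  unfold om
  rw [(convex_halfSpace_im_gt 0).isPreconnected.eq_of_exp_eq_one hcont hexp hz hw]
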